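/- arXiv:math/0504466 — 3 statements merged into one kernel-verified Lean document; each statement's English description precedes it below -/
import Mathlib

section
/- For all real y with 0 ≤ y ≤ n (n a positive integer, y real), (1 + y/n)^(-n) ≤ exp(-y/2). -/
/-! Since `log (1 + x) ≥ x / (1 + x) ≥ x / 2` on `[0, 1]`, we get `exp (x / 2) ≤ 1 + x` there;
raising this to the `n`-th power at `x = y / n` gives `exp (y / 2) ≤ (1 + y / n) ^ n`. -/

open Real

lemma half_le_log_one_add {x : ℝ} (hx0 : 0 ≤ x) (hx1 : x ≤ 1) : x / 2 ≤ log (1 + x) :=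
  calc x / 2 ≤ x / (1 + x) := div_le_div_of_nonneg_left hx0 (by linarith) (by linarith)
    _ = 1 - (1 + x)⁻¹ := by field_simp; ring
    _ ≤ log (1 + x) := one_sub_inv_le_log_of_pos (by linarith)

lemma exp_half_le_one_add {x : ℝ} (hx0 : 0 ≤ x) (hx1 : x ≤ 1) : exp (x / 2) ≤ 1 + x :=
  (le_log_iff_exp_le (by linarith)).1 (half_le_log_one_add hx0 hx1)

lemma exp_mul_half_le_one_add_pow {x : ℝ} (hx0 : 0 ≤ x) (hx1 : x ≤ 1) (n : ℕ) :
    exp (n * x / 2) ≤ (1 + x) ^ n := by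
  rw [mul_div_assoc, exp_nat_mul]
  exact pow_le_pow_left₀ (exp_pos _).le (exp_half_le_one_add hx0 hx1) n

theorem stmt_0 (n : ℕ) (hn : 0 < n) (y : ℝ) (hy0 : 0 ≤ y) (hyn : y ≤ n) :
    ((1 + y / n) ^ n)⁻¹ ≤ Real.exp (-y / 2) := by
  have hn' : (0 : ℝ) < n := by exact_mod_cast hn
  have h := exp_mul_half_le_one_add_pow (div_nonneg hy0 hn'.le) ((div_le_one hn').2 hyn) n
  rw [mul_div_cancel₀ _ hn'.ne'] at h
  rw [neg_div, exp_neg]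
  exact inv_anti₀ (exp_pos _) h
end

section
/- For every R ≥ 0 and a > 0, the integral ∫_{R}^{∞} exp(-a cosh(x)/2) dx is at most φ(a) · exp(-a cosh(R)/2), where φ(a) = 2 + |log(1 - exp(-a/2))|. -/
/-!
Writing `l = a / 2`, the identity `cosh (R + u) = cosh R cosh u + sinh R sinh u` gives
`cosh (R + u) ≥ cosh R + cosh u - 1` for `R, u ≥ 0`, which reduces the claim to `R = 0`,
i.e. `∫_0^∞ e^{-l cosh t} dt ≤ (2 + |log (1 - e^{-l})|) e^{-l}`.
For `l` bounded below, `cosh t ≥ 1 + t² / 2` and the Gaussian integral give the bound `2 e^{-l}`.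
For small `l`, split at `T = |log (1 - e^{-l})|`: on `(0, T]` the integrand is at most `e^{-l}`,
and on `(T, ∞)` the tangent line of `cosh` at `T` bounds the integral by
`e^{-l cosh T} / (l sinh T) ≤ 2 e^{-l}`, the last step being an elementary inequality in `l`.
-/
open Real MeasureTheory Set

lemma one_add_sq_div_two_le_cosh (x : ℝ) : 1 + x ^ 2 / 2 ≤ cosh x := by
  have := sum_le_hasSum (Finset.range 2)
    (fun n _ => div_nonneg ((even_two_mul n).pow_nonneg x) (by positivity)) (hasSum_cosh x)
  simpa [Finset.sum_range_succ] using this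

lemma cosh_add_cosh_le_cosh_add_add_one {u v : ℝ} (hu : 0 ≤ u) (hv : 0 ≤ v) :
    cosh u + cosh v ≤ cosh (u + v) + 1 := by
  have hsu : 0 ≤ sinh u := sinh_nonneg_iff.2 hu
  have hsv : 0 ≤ sinh v := sinh_nonneg_iff.2 hv
  rw [cosh_add]
  nlinarith [mul_nonneg (sub_nonneg.2 (one_le_cosh u)) (sub_nonneg.2 (one_le_cosh v)),
    mul_nonneg hsu hsv]

lemma cosh_add_mul_sinh_le_cosh_add {u v : ℝ} (hu : 0 ≤ u) (hv : 0 ≤ v) :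
    cosh u + v * sinh u ≤ cosh (u + v) := by
  have hsu : 0 ≤ sinh u := sinh_nonneg_iff.2 hu
  rw [cosh_add]
  nlinarith [mul_nonneg (cosh_pos u).le (sub_nonneg.2 (one_le_cosh v)),
    mul_nonneg hsu (sub_nonneg.2 (self_le_sinh_iff.2 hv))]

lemma setIntegral_Ioi_comp_sub_right {E : Type*} [NormedAddCommGroup E] [NormedSpace ℝ E]
    (g : ℝ → E) (c : ℝ) : ∫ x in Ioi c, g (x - c) = ∫ t in Ioi 0, g t := by
  simpa using (measurePreserving_sub_right volume c).setIntegral_preimage_emb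
    (measurableEmbedding_subRight c) g (Ioi 0)

lemma exp_neg_mul_cosh_le {l : ℝ} (hl : 0 ≤ l) (x : ℝ) :
    exp (-l * cosh x) ≤ exp (-l) * exp (-(l / 2) * x ^ 2) := by
  rw [← exp_add]
  exact exp_le_exp.2 (by nlinarith [one_add_sq_div_two_le_cosh x])

lemma integrable_exp_neg_mul_cosh {l : ℝ} (hl : 0 < l) :
    Integrable fun x => exp (-l * cosh x) :=
  ((integrable_exp_neg_mul_sq (half_pos hl)).const_mul (exp (-l))).mono' (by fun_prop)
    (ae_of_all _ fun x => (norm_of_nonneg (exp_pos _).le).trans_le (exp_neg_mul_cosh_le hl.le x))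

lemma setIntegral_Ioi_zero_exp_neg_mul_cosh_le_gaussian {l : ℝ} (hl : 0 < l) :
    ∫ t in Ioi 0, exp (-l * cosh t) ≤ √(π / (l / 2)) / 2 * exp (-l) :=
  calc ∫ t in Ioi 0, exp (-l * cosh t)
      ≤ ∫ t in Ioi 0, exp (-l) * exp (-(l / 2) * t ^ 2) :=
        setIntegral_mono (integrable_exp_neg_mul_cosh hl).integrableOn
          ((integrable_exp_neg_mul_sq (half_pos hl)).const_mul _).integrableOn
          (exp_neg_mul_cosh_le hl.le)
    _ = √(π / (l / 2)) / 2 * exp (-l) := by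
        rw [integral_const_mul, integral_gaussian_Ioi, mul_comm]

lemma setIntegral_Ioc_zero_exp_neg_mul_cosh_le {l T : ℝ} (hl : 0 ≤ l) (hT : 0 ≤ T) :
    ∫ t in Ioc 0 T, exp (-l * cosh t) ≤ T * exp (-l) := by
  have h := norm_setIntegral_le_of_norm_le_const (s := Ioc 0 T) (μ := volume) (C := exp (-l))
    measure_Ioc_lt_top fun t _ => by
      rw [norm_of_nonneg (exp_pos (-l * cosh t)).le]
      exact exp_le_exp.2 (by nlinarith [one_le_cosh t])
  rw [volume_real_Ioc_of_le hT, sub_zero, mul_comm] at h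
  exact (le_abs_self _).trans h

lemma setIntegral_Ioi_exp_neg_mul_cosh_le {l T : ℝ} (hl : 0 < l) (hT : 0 < T) :
    ∫ t in Ioi T, exp (-l * cosh t) ≤ exp (-l * cosh T) / (l * sinh T) := by
  have hs : 0 < l * sinh T := mul_pos hl (sinh_pos_iff.2 hT)
  have tangent : ∀ t ∈ Ioi T,
      exp (-l * cosh t) ≤ exp (-l * cosh T + l * sinh T * T) * exp (-(l * sinh T) * t) := by
    intro t ht
    have := cosh_add_mul_sinh_le_cosh_add hT.le (sub_nonneg.2 (le_of_lt ht))
    rw [add_sub_cancel] at this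
    rw [← exp_add]
    exact exp_le_exp.2 (by nlinarith)
  calc ∫ t in Ioi T, exp (-l * cosh t)
      ≤ ∫ t in Ioi T, exp (-l * cosh T + l * sinh T * T) * exp (-(l * sinh T) * t) :=
        setIntegral_mono_on (integrable_exp_neg_mul_cosh hl).integrableOn
          ((integrableOn_exp_mul_Ioi (neg_lt_zero.2 hs) T).const_mul _) measurableSet_Ioi tangent
    _ = exp (-l * cosh T) / (l * sinh T) := by
        rw [integral_const_mul, integral_exp_mul_Ioi (neg_lt_zero.2 hs), neg_div_neg_eq,
          mul_div_assoc', ← exp_add]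
        ring_nf

lemma setIntegral_Ioi_zero_exp_neg_mul_cosh_le_add {l T : ℝ} (hl : 0 < l) (hT : 0 < T) :
    ∫ t in Ioi 0, exp (-l * cosh t) ≤ T * exp (-l) + exp (-l * cosh T) / (l * sinh T) := by
  have hint := integrable_exp_neg_mul_cosh hl
  rw [← Ioc_union_Ioi_eq_Ioi hT.le, setIntegral_union (Ioc_disjoint_Ioi le_rfl)
    measurableSet_Ioi hint.integrableOn hint.integrableOn]
  exact add_le_add (setIntegral_Ioc_zero_exp_neg_mul_cosh_le hl.le hT.le)
    (setIntegral_Ioi_exp_neg_mul_cosh_le hl hT)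

lemma one_sub_exp_neg_le_mul_one_sub_sq {l : ℝ} (hl₀ : 0 ≤ l) (hl : l ≤ 2 / 5) :
    1 - exp (-l) ≤ l * (1 - (1 - exp (-l)) ^ 2) := by
  have hp₀ : 0 ≤ 1 - exp (-l) := by linarith [exp_le_one_iff.2 (neg_nonpos.2 hl₀)]
  have hp₁ : 1 - exp (-l) ≤ l := by linarith [add_one_le_exp (-l)]
  have taylor : 1 - exp (-l) ≤ l - l ^ 2 / 2 + 2 * l ^ 3 / 9 := by
    have h := exp_bound (x := -l) (by rw [abs_neg, abs_of_nonneg hl₀]; linarith) (n := 3)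
      (by norm_num)
    norm_num [Finset.sum_range_succ, Nat.factorial, abs_of_nonneg hl₀] at h
    linarith [(abs_le.1 h).1]
  nlinarith [mul_le_mul hp₁ hp₁ hp₀ hl₀]

lemma setIntegral_Ioi_zero_exp_neg_mul_cosh_le {l : ℝ} (hl : 0 < l) :
    ∫ t in Ioi 0, exp (-l * cosh t) ≤ (2 + |log (1 - exp (-l))|) * exp (-l) := by
  -- The Gaussian bound wins for `l ≥ π / 8`, the splitting bound for `l ≤ 9 / 22`.
  rcases le_or_gt (2 / 5) l with hl' | hl'
  · have hπ : √(π / (l / 2)) / 2 ≤ 2 := by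
      have : π / (l / 2) ≤ 4 ^ 2 := by
        rw [div_le_iff₀ (half_pos hl)]; nlinarith [pi_lt_d2]
      linarith [sqrt_le_iff.2 ⟨by norm_num, this⟩]
    calc ∫ t in Ioi 0, exp (-l * cosh t) ≤ √(π / (l / 2)) / 2 * exp (-l) :=
          setIntegral_Ioi_zero_exp_neg_mul_cosh_le_gaussian hl
      _ ≤ (2 + |log (1 - exp (-l))|) * exp (-l) := by
          gcongr; linarith [abs_nonneg (log (1 - exp (-l)))]
  · set p := 1 - exp (-l) with hp
    have hp₀ : 0 < p := by linarith [exp_lt_one_iff.2 (neg_lt_zero.2 hl)]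
    have hp₁ : p < 1 := by linarith [exp_pos (-l)]
    set T := -log p with hT
    have hT₀ : 0 < T := neg_pos.2 (log_neg hp₀ hp₁)
    have habs : |log p| = T := abs_of_neg (log_neg hp₀ hp₁)
    have hsinh : 2 * sinh T = p⁻¹ - p := by
      rw [sinh_eq, hT, neg_neg, exp_neg, exp_log hp₀]; ring
    have hsinh' : 1 ≤ 2 * (l * sinh T) := by
      have := one_sub_exp_neg_le_mul_one_sub_sq hl.le hl'.le
      rw [← hp] at this
      rw [mul_left_comm, hsinh, show l * (p⁻¹ - p) = l * (1 - p ^ 2) / p by field_simp,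
        le_div_iff₀ hp₀, one_mul]
      exact this
    have htail : exp (-l * cosh T) / (l * sinh T) ≤ 2 * exp (-l) := by
      rw [div_le_iff₀ (by linarith)]
      have : exp (-l * cosh T) ≤ exp (-l) := exp_le_exp.2 (by nlinarith [one_le_cosh T])
      nlinarith [exp_pos (-l)]
    calc ∫ t in Ioi 0, exp (-l * cosh t)
        ≤ T * exp (-l) + exp (-l * cosh T) / (l * sinh T) :=
          setIntegral_Ioi_zero_exp_neg_mul_cosh_le_add hl hT₀
      _ ≤ T * exp (-l) + 2 * exp (-l) := by gcongr
      _ = (2 + |log p|) * exp (-l) := by rw [habs]; ring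

lemma setIntegral_Ioi_exp_neg_mul_cosh_le_mul_setIntegral_Ioi_zero {l R : ℝ} (hl : 0 < l)
    (hR : 0 ≤ R) :
    ∫ x in Ioi R, exp (-l * cosh x) ≤
      exp (-l * (cosh R - 1)) * ∫ t in Ioi 0, exp (-l * cosh t) := by
  rw [← integral_const_mul, ← setIntegral_Ioi_comp_sub_right _ R]
  refine setIntegral_mono_on (integrable_exp_neg_mul_cosh hl).integrableOn
    (((integrable_exp_neg_mul_cosh hl).comp_sub_right R).const_mul _).integrableOn
    measurableSet_Ioi fun x hx => ?_
  have := cosh_add_cosh_le_cosh_add_add_one hR (sub_nonneg.2 (le_of_lt hx))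
  rw [add_sub_cancel] at this
  rw [← exp_add]
  exact exp_le_exp.2 (by nlinarith)

theorem stmt_5 (R a : ℝ) (hR : 0 ≤ R) (ha : 0 < a) :
    ∫ x in Set.Ioi R, Real.exp (-a * Real.cosh x / 2) ≤
      (2 + |Real.log (1 - Real.exp (-a / 2))|) * Real.exp (-a * Real.cosh R / 2) := by
  have hl : 0 < a / 2 := half_pos ha
  have hdiv : ∀ y, -a * y / 2 = -(a / 2) * y := fun y => by ring
  simp only [hdiv, neg_div]
  calc ∫ x in Ioi R, exp (-(a / 2) * cosh x)
      ≤ exp (-(a / 2) * (cosh R - 1)) * ∫ t in Ioi 0, exp (-(a / 2) * cosh t) :=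
        setIntegral_Ioi_exp_neg_mul_cosh_le_mul_setIntegral_Ioi_zero hl hR
    _ ≤ exp (-(a / 2) * (cosh R - 1)) * ((2 + |log (1 - exp (-(a / 2)))|) * exp (-(a / 2))) := by
        gcongr; exact setIntegral_Ioi_zero_exp_neg_mul_cosh_le hl
    _ = (2 + |log (1 - exp (-(a / 2)))|) * exp (-(a / 2) * cosh R) := by
        rw [mul_left_comm, ← exp_add]; ring_nf
end

section
/- For R ≥ 0, a > 0 and integer n ≥ 2, ∫_{R}^{∞} (1 + (a/n) cosh x)^{-n} dx ≤ φ(a) · exp(-a cosh(R)/2) + (1 + (a/n) cosh R)^{-(n-1)}, where φ(a) = 2 + |log(1 - exp(-a/2))|. -/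
/-!
Write `c = a / n`, `L = log (2 / c)`, and split `(R, ∞)` at `max R L`. On `(R, L]` we have
`c cosh x ≤ c eˣ ≤ 2`, where `1 + u ≥ exp (u / 2)`, so the integrand is at most
`exp (-(a / 2) cosh x)`. Beyond `max R L`, `(1 + c cosh x)^n ≥ (1 + c cosh R)^(n - 1) · c eˣ / 2`,
and `∫ 2 e⁻ˣ / c ≤ 1` there.
For `∫_R^∞ exp (-b cosh x)`, bound the integrand by `exp (-b cosh R)` on `(R, R + T)` and by
`sinh x exp (-b cosh x) / sinh T` beyond, which integrates exactly; `T = 1 + max 0 (-log b)`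
makes `T + 1 / (b sinh T) ≤ 2 + |log (1 - exp (-b))|`, since `1 - exp (-b) ≤ b`.
-/

open Real MeasureTheory Set Filter Topology

theorem setIntegral_Ioi_eq_Ioc_add_Ioi {E : Type*} [NormedAddCommGroup E] [NormedSpace ℝ E]
    {μ : Measure ℝ} {f : ℝ → E} {a b : ℝ} (hf : IntegrableOn f (Ioi a) μ) (hab : a ≤ b) :
    ∫ x in Ioi a, f x ∂μ = ∫ x in Ioc a b, f x ∂μ + ∫ x in Ioi b, f x ∂μ := by
  rw [← Ioc_union_Ioi_eq_Ioi hab, setIntegral_union (Ioc_disjoint_Ioi le_rfl) measurableSet_Ioi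
    (hf.mono_set Ioc_subset_Ioi_self) (hf.mono_set (Ioi_subset_Ioi hab))]

theorem Set.Ioc_max_right_eq {α : Type*} [LinearOrder α] (a b : α) : Ioc a (max a b) = Ioc a b := by
  ext x
  simp only [mem_Ioc, le_max_iff]
  grind

namespace Real

theorem self_le_cosh (x : ℝ) : x ≤ cosh x := by
  rcases le_total 0 x with hx | hx
  · exact (self_le_sinh_iff.2 hx).trans (sinh_lt_cosh x).le
  · linarith [one_le_cosh x]

theorem exp_div_two_le_cosh (x : ℝ) : exp x / 2 ≤ cosh x := by
  rw [cosh_eq]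
  linarith [exp_pos (-x)]

theorem cosh_le_exp {x : ℝ} (hx : 0 ≤ x) : cosh x ≤ exp x := by
  rw [← sub_nonneg, exp_sub_cosh, sinh_nonneg_iff]
  exact hx

-- `exp` lies below its chord on `[0, 1]`, whose slope `e - 1` is at most `2`.
theorem exp_half_le_one_add {u : ℝ} (h0 : 0 ≤ u) (h2 : u ≤ 2) : exp (u / 2) ≤ 1 + u := by
  have hchord := convexOn_exp.2 (mem_univ 0) (mem_univ 1) (by linarith : 0 ≤ 1 - u / 2)
    (by linarith : 0 ≤ u / 2) (by ring)
  simp only [smul_eq_mul, mul_zero, mul_one, zero_add, exp_zero] at hchord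
  nlinarith [exp_one_lt_d9]

theorem cosh_le_cosh_of_nonneg_of_le {x y : ℝ} (hx : 0 ≤ x) (hxy : x ≤ y) : cosh x ≤ cosh y := by
  rw [cosh_le_cosh, abs_of_nonneg hx, abs_of_nonneg (hx.trans hxy)]
  exact hxy

end Real

section ExpNegMulCosh

variable {b : ℝ}

theorem integrableOn_exp_neg_mul_cosh_Ioi (hb : 0 < b) (R : ℝ) :
    IntegrableOn (fun x => exp (-b * cosh x)) (Ioi R) := by
  refine (exp_neg_integrableOn_Ioi R hb).mono' (by fun_prop : Continuous _).aestronglyMeasurable ?_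
  filter_upwards with x
  rw [norm_of_nonneg (exp_pos _).le, exp_le_exp]
  nlinarith [self_le_cosh x]

theorem hasDerivAt_neg_exp_neg_mul_cosh (b x : ℝ) :
    HasDerivAt (fun x => -exp (-b * cosh x)) (b * sinh x * exp (-b * cosh x)) x :=
  (((hasDerivAt_cosh x).const_mul (-b)).exp).fun_neg.congr_deriv (by ring)

theorem tendsto_neg_exp_neg_mul_cosh (hb : 0 < b) :
    Tendsto (fun x => -exp (-b * cosh x)) atTop (𝓝 0) := by
  have hcosh : Tendsto cosh atTop atTop := tendsto_atTop_mono self_le_cosh tendsto_id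
  simpa using (tendsto_exp_atBot.comp (hcosh.const_mul_atTop_of_neg (neg_lt_zero.2 hb))).neg

theorem integrableOn_mul_sinh_mul_exp_neg_mul_cosh_Ioi (hb : 0 < b) {S : ℝ} (hS : 0 ≤ S) :
    IntegrableOn (fun x => b * sinh x * exp (-b * cosh x)) (Ioi S) :=
  integrableOn_Ioi_deriv_of_nonneg' (fun x _ => hasDerivAt_neg_exp_neg_mul_cosh b x)
    (fun _ hx => mul_nonneg (mul_nonneg hb.le (sinh_nonneg_iff.2 (hS.trans hx.out.le)))
      (exp_pos _).le)
    (tendsto_neg_exp_neg_mul_cosh hb)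

theorem integral_Ioi_mul_sinh_mul_exp_neg_mul_cosh (hb : 0 < b) {S : ℝ} (hS : 0 ≤ S) :
    ∫ x in Ioi S, b * sinh x * exp (-b * cosh x) = exp (-b * cosh S) := by
  simpa using integral_Ioi_of_hasDerivAt_of_tendsto'
    (fun x _ => hasDerivAt_neg_exp_neg_mul_cosh b x)
    (integrableOn_mul_sinh_mul_exp_neg_mul_cosh_Ioi hb hS) (tendsto_neg_exp_neg_mul_cosh hb)

theorem integral_exp_neg_mul_cosh_Ioi_le {R T : ℝ} (hR : 0 ≤ R) (hb : 0 < b) (hT : 0 < T) :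
    ∫ x in Ioi R, exp (-b * cosh x) ≤ (T + (b * sinh T)⁻¹) * exp (-b * cosh R) := by
  have hexp_le : ∀ x, R ≤ x → exp (-b * cosh x) ≤ exp (-b * cosh R) := fun x hx => by
    rw [exp_le_exp]
    nlinarith [cosh_le_cosh_of_nonneg_of_le hR hx]
  have hbsinh : 0 < b * sinh T := mul_pos hb (sinh_pos_iff.2 hT)
  have hnear : ∫ x in Ioc R (R + T), exp (-b * cosh x) ≤ T * exp (-b * cosh R) := by
    calc ∫ x in Ioc R (R + T), exp (-b * cosh x)
        ≤ ∫ _ in Ioc R (R + T), exp (-b * cosh R) :=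
          setIntegral_mono_on ((integrableOn_exp_neg_mul_cosh_Ioi hb R).mono_set
            Ioc_subset_Ioi_self) (integrableOn_const (by simp)) measurableSet_Ioc
            fun x hx => hexp_le x hx.1.le
      _ = T * exp (-b * cosh R) := by simp [hT.le]
  have hfar : ∫ x in Ioi (R + T), exp (-b * cosh x) ≤ (b * sinh T)⁻¹ * exp (-b * cosh R) := by
    have hRT : 0 ≤ R + T := by linarith
    calc ∫ x in Ioi (R + T), exp (-b * cosh x)
        ≤ ∫ x in Ioi (R + T), (b * sinh T)⁻¹ * (b * sinh x * exp (-b * cosh x)) := by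
          refine setIntegral_mono_on ((integrableOn_exp_neg_mul_cosh_Ioi hb _))
            ((integrableOn_mul_sinh_mul_exp_neg_mul_cosh_Ioi hb hRT).const_mul _)
            measurableSet_Ioi fun x hx => ?_
          rw [← mul_assoc]
          refine le_mul_of_one_le_left (exp_pos _).le ((one_le_inv_mul₀ hbsinh).2 ?_)
          gcongr
          rw [sinh_le_sinh]
          linarith [hx.out]
      _ = (b * sinh T)⁻¹ * exp (-b * cosh (R + T)) := by
          rw [integral_const_mul, integral_Ioi_mul_sinh_mul_exp_neg_mul_cosh hb hRT]
      _ ≤ (b * sinh T)⁻¹ * exp (-b * cosh R) :=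
          mul_le_mul_of_nonneg_left (hexp_le (R + T) (by linarith)) (by positivity)
  rw [setIntegral_Ioi_eq_Ioc_add_Ioi (integrableOn_exp_neg_mul_cosh_Ioi hb R)
    (le_add_of_nonneg_right hT.le)]
  linarith

theorem exists_pos_add_inv_mul_sinh_le (hb : 0 < b) :
    ∃ T > 0, T + (b * sinh T)⁻¹ ≤ 2 + |log (1 - exp (-b))| := by
  rcases le_or_gt 1 b with hb1 | hb1
  · refine ⟨1, one_pos, ?_⟩
    have h : 1 ≤ b * sinh 1 := one_le_mul_of_one_le_of_one_le hb1 (self_le_sinh_iff.2 zero_le_one)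
    linarith [inv_le_one_of_one_le₀ h, abs_nonneg (log (1 - exp (-b)))]
  · refine ⟨1 - log b, by linarith [log_neg hb hb1], ?_⟩
    have hsinh : 1 ≤ b * sinh (1 - log b) := by
      have he : 2.7182818283 < exp 1 := exp_one_gt_d9
      rw [sinh_eq, exp_sub, neg_sub, exp_sub, exp_log hb]
      field_simp
      nlinarith
    have hpos : 0 < 1 - exp (-b) := sub_pos.2 (exp_lt_one_iff.2 (neg_lt_zero.2 hb))
    have hlog : log (1 - exp (-b)) ≤ log b :=
      log_le_log hpos (by linarith [add_one_le_exp (-b)])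
    linarith [inv_le_one_of_one_le₀ hsinh, neg_le_abs (log (1 - exp (-b)))]

theorem integral_exp_neg_mul_cosh_Ioi_le_log {R : ℝ} (hR : 0 ≤ R) (hb : 0 < b) :
    ∫ x in Ioi R, exp (-b * cosh x) ≤ (2 + |log (1 - exp (-b))|) * exp (-b * cosh R) := by
  obtain ⟨T, hT, hle⟩ := exists_pos_add_inv_mul_sinh_le hb
  exact (integral_exp_neg_mul_cosh_Ioi_le hR hb hT).trans (by gcongr)

end ExpNegMulCosh

theorem inv_pow_le_inv_pow_sub_one_mul_inv {K : Type*} [Field K] [LinearOrder K]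
    [IsStrictOrderedRing K] {u v : K} {n : ℕ} (hu : 0 < u) (huv : u ≤ v)
    (hn : n ≠ 0) : (v ^ n)⁻¹ ≤ (u ^ (n - 1))⁻¹ * v⁻¹ := by
  have hv : 0 < v := hu.trans_le huv
  rw [← pow_sub_one_mul hn, ← mul_inv]
  gcongr

section OneAddMulCosh

variable {c : ℝ} {n : ℕ}

theorem inv_one_add_mul_cosh_pow_le_exp (hc : 0 ≤ c) {x : ℝ} (h : c * cosh x ≤ 2) :
    ((1 + c * cosh x) ^ n)⁻¹ ≤ exp (-(n * c / 2) * cosh x) := by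
  have hu : 0 ≤ c * cosh x := mul_nonneg hc (zero_le_one.trans (one_le_cosh x))
  calc ((1 + c * cosh x) ^ n)⁻¹ ≤ (exp (c * cosh x / 2) ^ n)⁻¹ := by
        gcongr
        exact exp_half_le_one_add hu h
    _ = exp (-(n * c / 2) * cosh x) := by
        rw [← exp_nat_mul, ← exp_neg]
        ring_nf

theorem inv_one_add_mul_cosh_le (hc : 0 < c) (x : ℝ) :
    (1 + c * cosh x)⁻¹ ≤ 2 / c * exp (-x) := by
  calc (1 + c * cosh x)⁻¹ ≤ (c * exp x / 2)⁻¹ := by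
        gcongr
        nlinarith [exp_div_two_le_cosh x]
    _ = 2 / c * exp (-x) := by
        rw [exp_neg]
        field_simp

theorem integrableOn_inv_one_add_mul_cosh_pow_Ioi (hc : 0 < c) (hn : n ≠ 0) (R : ℝ) :
    IntegrableOn (fun x => ((1 + c * cosh x) ^ n)⁻¹) (Ioi R) := by
  refine ((integrableOn_exp_neg_Ioi R).const_mul (2 / c)).mono'
    (by fun_prop : Measurable fun x => ((1 + c * cosh x) ^ n)⁻¹).aestronglyMeasurable ?_
  filter_upwards with x
  have hbase : 1 ≤ 1 + c * cosh x := by nlinarith [one_le_cosh x]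
  rw [norm_of_nonneg (by positivity)]
  exact (inv_anti₀ (by linarith) (le_self_pow₀ hbase hn)).trans (inv_one_add_mul_cosh_le hc x)

theorem integral_Ioc_inv_one_add_mul_cosh_pow_le (hc : 0 ≤ c) {R T : ℝ} (hR : 0 ≤ R)
    (hT : c * exp T ≤ 2) :
    ∫ x in Ioc R T, ((1 + c * cosh x) ^ n)⁻¹ ≤ ∫ x in Ioc R T, exp (-(n * c / 2) * cosh x) := by
  refine integral_mono_of_nonneg (Eventually.of_forall fun x => by positivity)
    (by fun_prop : Continuous fun x => exp (-(n * c / 2) * cosh x)).integrableOn_Ioc ?_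
  filter_upwards [ae_restrict_mem measurableSet_Ioc] with x hx
  refine inv_one_add_mul_cosh_pow_le_exp hc ?_
  calc c * cosh x ≤ c * exp T := by
        gcongr
        exact (cosh_le_exp (hR.trans hx.1.le)).trans (exp_le_exp.2 hx.2)
    _ ≤ 2 := hT

theorem integral_Ioi_inv_one_add_mul_cosh_pow_le (hc : 0 < c) (hn : n ≠ 0) {R T : ℝ}
    (hR : 0 ≤ R) (hRT : R ≤ T) (hT : 2 ≤ c * exp T) :
    ∫ x in Ioi T, ((1 + c * cosh x) ^ n)⁻¹ ≤ ((1 + c * cosh R) ^ (n - 1))⁻¹ := by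
  calc ∫ x in Ioi T, ((1 + c * cosh x) ^ n)⁻¹
      ≤ ∫ x in Ioi T, ((1 + c * cosh R) ^ (n - 1))⁻¹ * (2 / c * exp (-x)) := by
        refine setIntegral_mono_on (integrableOn_inv_one_add_mul_cosh_pow_Ioi hc hn T)
          (((integrableOn_exp_neg_Ioi T).const_mul _).const_mul _) measurableSet_Ioi
          fun x hx => ?_
        have hcosh := cosh_le_cosh_of_nonneg_of_le hR (hRT.trans hx.out.le)
        calc ((1 + c * cosh x) ^ n)⁻¹
            ≤ ((1 + c * cosh R) ^ (n - 1))⁻¹ * (1 + c * cosh x)⁻¹ :=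
              inv_pow_le_inv_pow_sub_one_mul_inv (by nlinarith [one_le_cosh R]) (by gcongr) hn
          _ ≤ ((1 + c * cosh R) ^ (n - 1))⁻¹ * (2 / c * exp (-x)) := by
              gcongr
              exact inv_one_add_mul_cosh_le hc x
    _ = ((1 + c * cosh R) ^ (n - 1))⁻¹ * (2 / (c * exp T)) := by
        rw [integral_const_mul, integral_const_mul, integral_exp_neg_Ioi, exp_neg,
          ← div_eq_mul_inv, div_div]
    _ ≤ ((1 + c * cosh R) ^ (n - 1))⁻¹ :=
        mul_le_of_le_one_right (by positivity) (div_le_one_of_le₀ hT (by positivity))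

end OneAddMulCosh

theorem stmt_6 (R a : ℝ) (hR : 0 ≤ R) (ha : 0 < a) (n : ℕ) (hn : 2 ≤ n) :
    ∫ x in Set.Ioi R, ((1 + a / n * Real.cosh x) ^ n)⁻¹ ≤
      (2 + |Real.log (1 - Real.exp (-a / 2))|) * Real.exp (-a * Real.cosh R / 2) +
        ((1 + a / n * Real.cosh R) ^ (n - 1))⁻¹ := by
  set c := a / n
  have hc : 0 < c := by positivity
  have hn0 : n ≠ 0 := by omega
  have hnc : n * c / 2 = a / 2 := by simp only [c]; field_simp
  set L := log (2 / c)
  have hcL : c * exp L = 2 := by rw [exp_log (by positivity)]; field_simp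
  have hnear : ∫ x in Ioc R L, ((1 + c * cosh x) ^ n)⁻¹ ≤
      ∫ x in Ioi R, exp (-(a / 2) * cosh x) := by
    have h := integral_Ioc_inv_one_add_mul_cosh_pow_le (n := n) hc.le hR hcL.le
    rw [hnc] at h
    exact h.trans (setIntegral_mono_set (integrableOn_exp_neg_mul_cosh_Ioi (half_pos ha) R)
      (Eventually.of_forall fun _ => (exp_pos _).le) Ioc_subset_Ioi_self.eventuallyLE)
  have hfar := integral_Ioi_inv_one_add_mul_cosh_pow_le hc hn0 hR (le_max_left R L)
    (hcL.ge.trans (by gcongr; exact le_max_right R L))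
  have hexp := integral_exp_neg_mul_cosh_Ioi_le_log hR (half_pos ha)
  rw [setIntegral_Ioi_eq_Ioc_add_Ioi (integrableOn_inv_one_add_mul_cosh_pow_Ioi hc hn0 R)
    (le_max_left R L), Ioc_max_right_eq, neg_div, show -a * cosh R / 2 = -(a / 2) * cosh R by ring]
  linarith
end
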